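/- Let G be a RAN whose clique-tree T contains two degree-4 vertices q_i and q_j that are adjacent in T, with corresponding maximal cliques Q_i, Q_j. Then removing the vertex set Q_i ∪ Q_j from G leaves exactly 6 components, so τ(G) ≤ 5/6 < 1. -/

import Mathlib

open SimpleGraph ENNReal

namespace RanTough

/-- Number of connected components after deleting the vertex set `S` from `G`. -/
noncomputable def compCount {V : Type*} (G : SimpleGraph V) (S : Finset V) : ℕ :=
  Nat.card (G.induce ((↑S : Set V)ᶜ)).ConnectedComponent

/-- `G` is `t`-tough: `t * ω(G - S) ≤ |S|` whenever deleting `S` disconnects `G`. -/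
def IsTough {V : Type*} (G : SimpleGraph V) (t : ℝ≥0∞) : Prop :=
  ∀ S : Finset V, 1 < compCount G S → t * compCount G S ≤ S.card

/-- The toughness of `G`: the largest `t` such that `G` is `t`-tough
(`⊤` for complete graphs). -/
noncomputable def toughness {V : Type*} (G : SimpleGraph V) : ℝ≥0∞ :=
  sSup {t : ℝ≥0∞ | IsTough G t}

/-- A vertex is simplicial if its neighborhood is a clique. -/
def IsSimplicial {V : Type*} (G : SimpleGraph V) (v : V) : Prop :=
  G.IsClique (G.neighborSet v)

/-- `G` is a `k`-tree: there is a construction ordering starting from a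
`(k+1)`-clique in which each later vertex is attached to a `k`-clique
of earlier vertices. -/
def IsKTree {V : Type*} [Fintype V] (k : ℕ) (G : SimpleGraph V) : Prop :=
  k + 1 ≤ Fintype.card V ∧
  ∃ e : Fin (Fintype.card V) ≃ V,
    (∀ i j : Fin (Fintype.card V), (i : ℕ) < k + 1 → (j : ℕ) < k + 1 → i ≠ j →
      G.Adj (e i) (e j)) ∧
    (∀ i : Fin (Fintype.card V), k + 1 ≤ (i : ℕ) →
      ∃ S : Finset V, S.card = k ∧ G.IsClique (S : Set V) ∧
        ∀ w : V, (G.Adj (e i) w ∧ ∃ j, j < i ∧ e j = w) ↔ w ∈ S)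

/-- `Q` is a maximal clique of `G`. -/
def IsMaximalClique {V : Type*} (G : SimpleGraph V) (Q : Finset V) : Prop :=
  G.IsClique (Q : Set V) ∧ ∀ R : Finset V, G.IsClique (R : Set V) → Q ⊆ R → Q = R

/-- A clique-tree of `G`: a tree on the maximal cliques of `G` satisfying the
induced subtree property. -/
def IsCliqueTree {V : Type*} (G : SimpleGraph V)
    (T : SimpleGraph {Q : Finset V // IsMaximalClique G Q}) : Prop :=
  T.IsTree ∧ ∀ v : V,
    (T.induce {Q : {Q : Finset V // IsMaximalClique G Q} | v ∈ (Q : Finset V)}).Connected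

/-- A Random Apollonian Network: a uniquely representable (unique clique-tree) 3-tree. -/
def IsRAN {V : Type*} [Fintype V] (G : SimpleGraph V) : Prop :=
  IsKTree 3 G ∧ ∃! T : SimpleGraph {Q : Finset V // IsMaximalClique G Q}, IsCliqueTree G T

/-- `S` separates the nonadjacent vertices `u` and `v`. -/
def IsUVSeparator {V : Type*} (G : SimpleGraph V) (u v : V) (S : Finset V) : Prop :=
  u ≠ v ∧ ¬ G.Adj u v ∧ u ∉ S ∧ v ∉ S ∧ ∀ p : G.Walk u v, ∃ w ∈ p.support, w ∈ S

/-- `S` is a minimal vertex separator of `G`. -/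
def IsMinVtxSep {V : Type*} (G : SimpleGraph V) (S : Finset V) : Prop :=
  ∃ u v : V, IsUVSeparator G u v S ∧ ∀ S' : Finset V, S' ⊂ S → ¬ IsUVSeparator G u v S'

/-- The multiplicity of `S` as a minimal vertex separator with respect to
the clique-tree `T`: the number of edges of `T` whose endpoint intersection is `S`. -/
noncomputable def sepMultiplicity {V : Type*} [DecidableEq V] (G : SimpleGraph V)
    (T : SimpleGraph {Q : Finset V // IsMaximalClique G Q}) (S : Finset V) : ℕ :=
  {e ∈ T.edgeSet | ∃ Q Q' : {Q : Finset V // IsMaximalClique G Q},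
    e = s(Q, Q') ∧ (Q : Finset V) ∩ (Q' : Finset V) = S}.ncard

/-- Degree of a vertex in a graph, via `Set.ncard` (no instances needed). -/
noncomputable def deg {α : Type*} (T : SimpleGraph α) (q : α) : ℕ :=
  {r | T.Adj q r}.ncard

/-- A `k`-regular tree: every vertex that is not a leaf has degree `k`. -/
def IsRegularTree {α : Type*} (k : ℕ) (T : SimpleGraph α) : Prop :=
  T.IsTree ∧ ∀ q : α, deg T q = 1 ∨ deg T q = k

/-- Chordal: every cycle of length at least 4 has a chord. -/
def IsChordal {V : Type*} (G : SimpleGraph V) : Prop :=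
  ∀ (v : V) (c : G.Walk v v), c.IsCycle → 4 ≤ c.length →
    ∃ x y : V, x ∈ c.support ∧ y ∈ c.support ∧ G.Adj x y ∧ s(x, y) ∉ c.edges

/-- `H` is a minor of `G`. -/
def IsMinor {W V : Type*} (H : SimpleGraph W) (G : SimpleGraph V) : Prop :=
  ∃ B : W → Set V,
    (∀ w, (G.induce (B w)).Connected) ∧
    (∀ w₁ w₂, w₁ ≠ w₂ → Disjoint (B w₁) (B w₂)) ∧
    (∀ w₁ w₂, H.Adj w₁ w₂ → ∃ u ∈ B w₁, ∃ v ∈ B w₂, G.Adj u v)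

/-- Planar (Wagner): no `K₅` and no `K₃,₃` minor. -/
def IsPlanar {V : Type*} (G : SimpleGraph V) : Prop :=
  ¬ IsMinor (⊤ : SimpleGraph (Fin 5)) G ∧
  ¬ IsMinor (completeBipartiteGraph (Fin 3) (Fin 3)) G

end RanTough

open RanTough

/-
Let `R = Q_i ∪ Q_j`. In a 3-tree the separator `Q_i ∩ Q_j` of a clique-tree edge has three
vertices, so `|R| = 5`, and the private vertices of `Q_i` and `Q_j` are separated by it, hence
non-adjacent; so `Q_i` and `Q_j` are the only maximal cliques inside `R`. Uniqueness of the clique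
tree forbids the separator of any tree edge from lying in a third clique `Q` (the edge could be
re-hung at `Q`), so every tree edge away from `q_i, q_j` shares a vertex outside `R`. Hence the
components of `G - R` correspond to those of `T - {q_i, q_j}`, and deleting two adjacent vertices of
degree 4 from a tree leaves `4 + 4 - 2 = 6` components.
-/

namespace SimpleGraph

variable {α β : Type*} {G : SimpleGraph α} {H : SimpleGraph β}

lemma Reachable.of_adj_imp {f : α → β} (hf : ∀ a b, G.Adj a b → H.Reachable (f a) (f b))
    {x y : α} (hxy : G.Reachable x y) : H.Reachable (f x) (f y) := by
  obtain ⟨p⟩ := hxy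
  induction p with
  | nil => rfl
  | cons h _ ih => exact (hf _ _ h).trans ih

lemma Reachable.exists_walk_of_induce {s : Set α} {x y : s} (hxy : (G.induce s).Reachable x y) :
    ∃ p : G.Walk x y, ∀ z ∈ p.support, z ∈ s := by
  obtain ⟨p⟩ := hxy
  refine ⟨p.map (Embedding.induce s).toHom, fun z hz => ?_⟩
  obtain ⟨w, -, rfl⟩ := List.mem_map.1 (Walk.support_map _ p ▸ hz)
  exact w.2

lemma Walk.exists_boundary_reachable_induce {s : Set α} {x y : α} (p : G.Walk x y) (hx : x ∈ s)
    (hy : y ∉ s) :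
    ∃ n, ∃ hn : n ∈ s, (∃ z ∉ s, G.Adj n z) ∧ (G.induce s).Reachable ⟨x, hx⟩ ⟨n, hn⟩ := by
  induction p with
  | nil => exact absurd hx hy
  | @cons x z y h p ih =>
    by_cases hz : z ∈ s
    · obtain ⟨n, hn, hnz, hreach⟩ := ih hz hy
      exact ⟨n, hn, hnz, (induce_adj.2 h : (G.induce s).Adj ⟨x, hx⟩ ⟨z, hz⟩).reachable.trans hreach⟩
    · exact ⟨x, hx, ⟨z, hz, h⟩, .rfl⟩

lemma Walk.IsPath.exists_walk_notMem_edges [DecidableEq α] {x u : α} {p : G.Walk x u}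
    (hp : p.IsPath) (v : α) :
    ∃ y, (y = u ∨ y = v) ∧ ∃ q : G.Walk x y, s(u, v) ∉ q.edges ∧ q.support ⊆ p.support := by
  by_cases hv : v ∈ p.support ∧ v ≠ u
  · refine ⟨v, .inr rfl, p.takeUntil v hv.1, fun h => ?_, p.support_takeUntil_subset_support hv.1⟩
    exact Walk.endpoint_notMem_support_takeUntil hp hv.1 hv.2.symm
      ((p.takeUntil v hv.1).fst_mem_support_of_mem_edges h)
  · refine ⟨u, .inl rfl, p, fun h => hv ⟨p.snd_mem_support_of_mem_edges h, fun hvu => ?_⟩,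
      fun _ => id⟩
    subst hvu
    exact G.irrefl (p.adj_of_mem_edges h)

lemma Reachable.deleteEdges_or {x u : α} (hxu : G.Reachable x u) (v : α) :
    (G.deleteEdges {s(u, v)}).Reachable x u ∨ (G.deleteEdges {s(u, v)}).Reachable x v := by
  classical
  obtain ⟨p, hp⟩ := hxu.exists_isPath
  obtain ⟨y, rfl | rfl, q, hq, -⟩ := hp.exists_walk_notMem_edges v <;>
  [left; right] <;>
  exact ⟨q.toDeleteEdges _ fun e he h => hq (Set.mem_singleton_iff.1 h ▸ he)⟩

lemma Reachable.induce_deleteEdges {s : Set α} {x u v : α} {hx : x ∈ s} {hu : u ∈ s}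
    (hxu : (G.induce s).Reachable ⟨x, hx⟩ ⟨u, hu⟩)
    (hxv : ¬ (G.deleteEdges {s(u, v)}).Reachable x v) :
    ((G.deleteEdges {s(u, v)}).induce s).Reachable ⟨x, hx⟩ ⟨u, hu⟩ := by
  classical
  obtain ⟨p, hp⟩ : ∃ p : G.Walk x u, ∀ z ∈ p.support, z ∈ s := hxu.exists_walk_of_induce
  obtain ⟨y, rfl | rfl, q, hq, hqp⟩ := p.toPath.2.exists_walk_notMem_edges v
  · exact ⟨(q.toDeleteEdges _ fun e he h => hq (by rwa [← Set.mem_singleton_iff.1 h])).induce s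
      fun z hz => hp z (p.support_toPath_subset_support (hqp (by simpa using hz)))⟩
  · exact absurd ⟨q.toDeleteEdges _ fun e he h => hq (by rwa [← Set.mem_singleton_iff.1 h])⟩ hxv

section Tree

variable {T : SimpleGraph α}

lemma IsAcyclic.eq_of_adj_of_walk (hT : T.IsAcyclic) {a b n m : α} (hab : a = b ∨ T.Adj a b)
    (hn : T.Adj a n) (hm : T.Adj b m) (p : T.Walk n m) (ha : a ∉ p.support)
    (hb : b ∉ p.support) : n = m := by
  classical
  have hq : (Walk.cons hn p.toPath.1).IsPath :=
    Walk.IsPath.cons p.toPath.2 fun h => ha (p.support_toPath_subset_support h)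
  rcases hab with rfl | hab
  · simpa using (hT.eq_snd_of_adj_start hq hm (Walk.end_mem_support _)).symm
  · have hbq : b ∉ (Walk.cons hn p.toPath.1).support := by
      simpa [hab.ne'] using fun h => hb (p.support_toPath_subset_support h)
    have := hT.mem_support_of_ne_mem_support_of_adj_of_isPath
      (Walk.IsPath.of_adj hab) hq hm hbq
    rcases (by simpa using this : m = a ∨ m = b) with rfl | rfl
    · exact absurd p.end_mem_support ha
    · exact absurd p.end_mem_support hb

theorem IsTree.natCard_connectedComponent_induce_compl_pair_eq_ncard (hT : T.IsTree)
    {u v : α} (huv : T.Adj u v) :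
    Nat.card (T.induce {u, v}ᶜ).ConnectedComponent =
      ((T.neighborSet u \ {v}) ∪ (T.neighborSet v \ {u})).ncard := by
  set N : Set α := (T.neighborSet u \ {v}) ∪ (T.neighborSet v \ {u})
  have hN : ∀ n ∈ N, n ∉ ({u, v} : Set α) ∧ ∃ a, (a = u ∨ a = v) ∧ T.Adj a n := by
    rintro n (⟨hn, hnv⟩ | ⟨hn, hnu⟩)
    · exact ⟨by simpa [hn.ne'] using hnv, u, .inl rfl, hn⟩
    · exact ⟨by simpa [hn.ne'] using hnu, v, .inr rfl, hn⟩
  let φ : N → (T.induce {u, v}ᶜ).ConnectedComponent := fun n =>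
    connectedComponentMk _ ⟨n, (hN n n.2).1⟩
  have hφinj : φ.Injective := by
    rintro ⟨n, hn⟩ ⟨m, hm⟩ hnm
    obtain ⟨p, hp⟩ := (ConnectedComponent.exact hnm).exists_walk_of_induce
    obtain ⟨a, ha, hna⟩ := (hN n hn).2
    obtain ⟨b, hb, hmb⟩ := (hN m hm).2
    have hab : a = b ∨ T.Adj a b := by
      rcases ha with rfl | rfl <;> rcases hb with rfl | rfl <;> simp [huv, huv.symm]
    have hsupp : ∀ c, (c = u ∨ c = v) → c ∉ p.support := fun c hc h => hp c h (by simpa using hc)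
    exact Subtype.ext (hT.isAcyclic.eq_of_adj_of_walk hab hna hmb p (hsupp a ha) (hsupp b hb))
  have hφsurj : φ.Surjective := by
    refine ConnectedComponent.ind fun x => ?_
    obtain ⟨p⟩ := hT.connected.preconnected x.1 u
    obtain ⟨n, hn, ⟨z, hz, hnz⟩, hxn⟩ := p.exists_boundary_reachable_induce x.2 (by simp)
    have hnN : n ∈ N := by
      simp only [Set.mem_compl_iff, Set.mem_insert_iff, Set.mem_singleton_iff, not_or] at hn
      rcases not_not.1 hz with rfl | rfl
      · exact .inl ⟨hnz.symm, hn.2⟩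
      · exact .inr ⟨hnz.symm, hn.1⟩
    exact ⟨⟨n, hnN⟩, ConnectedComponent.sound hxn.symm⟩
  rw [← Nat.card_eq_of_bijective φ ⟨hφinj, hφsurj⟩, Nat.card_coe_set_eq]

theorem IsTree.natCard_connectedComponent_induce_compl_pair [Finite α] (hT : T.IsTree)
    {u v : α} (huv : T.Adj u v) :
    Nat.card (T.induce {u, v}ᶜ).ConnectedComponent + 2 = deg T u + deg T v := by
  classical
  have hdisj : Disjoint (T.neighborSet u \ {v}) (T.neighborSet v \ {u}) :=
    Set.disjoint_left.2 fun n hnu hnv =>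
      hT.isAcyclic.cliqueFree le_rfl {u, v, n} (is3Clique_triple_iff.2 ⟨huv, hnu.1, hnv.1⟩)
  rw [hT.natCard_connectedComponent_induce_compl_pair_eq_ncard huv, Set.ncard_union_eq hdisj,
    show deg T u = (T.neighborSet u).ncard from rfl,
    show deg T v = (T.neighborSet v).ncard from rfl,
    ← Set.ncard_sdiff_singleton_add_one (show v ∈ T.neighborSet u from huv),
    ← Set.ncard_sdiff_singleton_add_one (show u ∈ T.neighborSet v from huv.symm)]
  ring

end Tree

section Cover

variable (c : β → Set α)

lemma reachable_index_of_reachable (hedge : ∀ x y, G.Adj x y → ∃ i, x ∈ c i ∧ y ∈ c i)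
    (hstar : ∀ v i j, v ∈ c i → v ∈ c j → H.Reachable i j) {x y : α} (hxy : G.Reachable x y)
    {i j : β} (hi : x ∈ c i) (hj : y ∈ c j) : H.Reachable i j := by
  obtain ⟨p⟩ := hxy
  induction p generalizing i with
  | nil => exact hstar _ i j hi hj
  | cons h _ ih =>
    obtain ⟨k, hxk, hzk⟩ := hedge _ _ h
    exact (hstar _ i k hi hxk).trans (ih hzk hj)

lemma reachable_of_reachable_index (hc : ∀ i, ∀ x ∈ c i, ∀ y ∈ c i, G.Reachable x y)
    (hadj : ∀ i j, H.Adj i j → ∃ v, v ∈ c i ∧ v ∈ c j) {i j : β} (hij : H.Reachable i j)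
    {x y : α} (hx : x ∈ c i) (hy : y ∈ c j) : G.Reachable x y := by
  obtain ⟨p⟩ := hij
  induction p generalizing x with
  | nil => exact hc _ x hx y hy
  | cons h _ ih =>
    obtain ⟨v, hvi, hvk⟩ := hadj _ _ h
    exact (hc _ x hx v hvi).trans (ih hvk hy)

theorem natCard_connectedComponent_eq_of_cover (hne : ∀ i, (c i).Nonempty)
    (hcover : ∀ x, ∃ i, x ∈ c i) (hc : ∀ i, ∀ x ∈ c i, ∀ y ∈ c i, G.Reachable x y)
    (hedge : ∀ x y, G.Adj x y → ∃ i, x ∈ c i ∧ y ∈ c i)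
    (hadj : ∀ i j, H.Adj i j → ∃ v, v ∈ c i ∧ v ∈ c j)
    (hstar : ∀ v i j, v ∈ c i → v ∈ c j → H.Reachable i j) :
    Nat.card G.ConnectedComponent = Nat.card H.ConnectedComponent := by
  let φ : H.ConnectedComponent → G.ConnectedComponent :=
    ConnectedComponent.lift (fun i => G.connectedComponentMk (hne i).some) fun i j p _ =>
      ConnectedComponent.sound <|
        reachable_of_reachable_index c hc hadj ⟨p⟩ (hne i).some_mem (hne j).some_mem
  refine (Nat.card_eq_of_bijective φ ⟨?_, ?_⟩).symm
  · refine ConnectedComponent.ind₂ fun i j hij => ConnectedComponent.sound ?_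
    exact reachable_index_of_reachable c hedge hstar (ConnectedComponent.exact hij)
      (hne i).some_mem (hne j).some_mem
  · refine ConnectedComponent.ind fun x => ?_
    obtain ⟨i, hi⟩ := hcover x
    exact ⟨H.connectedComponentMk i, ConnectedComponent.sound (hc i _ (hne i).some_mem x hi)⟩

end Cover

end SimpleGraph

namespace RanTough

local notation "MaxClique " G:max => {Q : Finset _ // IsMaximalClique G Q}

variable {V : Type*} {G : SimpleGraph V}

theorem toughness_le_of_one_lt_compCount {S : Finset V} (hS : 1 < compCount G S) :
    toughness G ≤ S.card / compCount G S :=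
  sSup_le fun _ ht =>
    (ENNReal.le_div_iff_mul_le (.inl (by simp; omega)) (.inl (by simp))).2 (ht S hS)

section CliqueTree

lemma exists_isMaximalClique_superset [Finite V] {C : Finset V} (hC : G.IsClique (C : Set V)) :
    ∃ Q, IsMaximalClique G Q ∧ C ⊆ Q := by
  obtain ⟨Q, hCQ, hQ⟩ := Set.Finite.exists_le_maximal
    (s := {R : Finset V | G.IsClique (R : Set V) ∧ C ⊆ R}) (Set.toFinite _) ⟨hC, subset_rfl⟩
  exact ⟨Q, ⟨hQ.prop.1, fun R hR hQR => hQ.eq_of_le ⟨hR, hQ.prop.2.trans hQR⟩ hQR⟩, hCQ⟩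

lemma exists_isMaximalClique_mem_mem [Finite V] {x y : V} (hxy : x ≠ y → G.Adj x y) :
    ∃ Q, IsMaximalClique G Q ∧ x ∈ Q ∧ y ∈ Q := by
  classical
  obtain ⟨Q, hQ, hxyQ⟩ := exists_isMaximalClique_superset (G := G) (C := {x, y})
    (by rw [Finset.coe_pair]; exact isClique_pair.2 hxy)
  exact ⟨Q, hQ, hxyQ (by simp), hxyQ (by simp)⟩

variable {T : SimpleGraph (MaxClique G)}

lemma exists_walk_forall_mem_support (hT : ∀ v : V, (T.induce {Q | v ∈ Q.1}).Connected)
    {v : V} {X Y : MaxClique G} (hX : v ∈ X.1) (hY : v ∈ Y.1) :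
    ∃ p : T.Walk X Y, ∀ Q ∈ p.support, v ∈ Q.1 :=
  ((hT v).preconnected ⟨X, hX⟩ ⟨Y, hY⟩).exists_walk_of_induce

theorem compCount_eq_natCard_connectedComponent_induce [Finite V]
    (hT : ∀ v : V, (T.induce {Q | v ∈ Q.1}).Connected) (R : Finset V)
    (hR : ∀ X Y, T.Adj X Y → ¬ X.1 ⊆ R → ¬ Y.1 ⊆ R → ∃ v ∈ X.1, v ∈ Y.1 ∧ v ∉ R) :
    compCount G R = Nat.card (T.induce {X | ¬ X.1 ⊆ R}).ConnectedComponent := by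
  have hnotSub : ∀ {X : MaxClique G} {v : V}, v ∈ X.1 → v ∉ R → ¬ X.1 ⊆ R :=
    fun hvX hvR hXR => hvR (hXR hvX)
  apply natCard_connectedComponent_eq_of_cover
    (c := fun X : ({X | ¬ X.1 ⊆ R} : Set (MaxClique G)) => {x : ↥(R : Set V)ᶜ | x.1 ∈ X.1.1})
  · intro X
    obtain ⟨x, hxX, hxR⟩ := Finset.not_subset.1 X.2
    exact ⟨⟨x, hxR⟩, hxX⟩
  · intro x
    obtain ⟨Q, hQ, hxQ, -⟩ :=
      exists_isMaximalClique_mem_mem (G := G) (x := x.1) (y := x.1) fun h => absurd rfl h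
    exact ⟨⟨⟨Q, hQ⟩, hnotSub hxQ x.2⟩, hxQ⟩
  · intro X x hx y hy
    by_cases hxy : x = y
    · rw [hxy]
    · exact Adj.reachable (X.1.2.1 hx hy (Subtype.coe_ne_coe.2 hxy))
  · intro x y hxy
    obtain ⟨Q, hQ, hxQ, hyQ⟩ := exists_isMaximalClique_mem_mem (G := G) fun _ => hxy
    exact ⟨⟨⟨Q, hQ⟩, hnotSub hxQ x.2⟩, hxQ, hyQ⟩
  · intro X Y hXY
    obtain ⟨v, hvX, hvY, hvR⟩ := hR _ _ hXY X.2 Y.2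
    exact ⟨⟨v, hvR⟩, hvX, hvY⟩
  · intro v X Y hvX hvY
    obtain ⟨p, hp⟩ := exists_walk_forall_mem_support hT hvX hvY
    exact ⟨p.induce _ fun Q hQ => hnotSub (hp Q hQ) v.2⟩

end CliqueTree

section Separator

variable [Finite V] [DecidableEq V] {T : SimpleGraph (MaxClique G)}

theorem IsCliqueTree.not_reachable_induce_compl_inter (hT : IsCliqueTree G T)
    {A B : MaxClique G} (hAB : T.Adj A B) {x y : V}
    (hxA : x ∈ A.1) (hxB : x ∉ B.1) (hyB : y ∈ B.1) (hyA : y ∉ A.1) :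
    ¬ (G.induce (A.1 ∩ B.1 : Finset V)ᶜ).Reachable ⟨x, by simp [hxB]⟩ ⟨y, by simp [hyA]⟩ := by
  intro hxy
  refine isBridge_iff.1 (isAcyclic_iff_forall_isBridge.1 hT.1.isAcyclic (e := s(A, B)) hAB) <|
    reachable_index_of_reachable
      (fun Q : MaxClique G => {z : ↥((A.1 ∩ B.1 : Finset V) : Set V)ᶜ | z.1 ∈ Q.1})
      ?_ ?_ hxy (show x ∈ A.1 from hxA) (show y ∈ B.1 from hyB)
  · intro x y hxy
    obtain ⟨Q, hQ, hxQ, hyQ⟩ := exists_isMaximalClique_mem_mem (G := G) fun _ => hxy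
    exact ⟨⟨Q, hQ⟩, hxQ, hyQ⟩
  · intro v X Y hvX hvY
    obtain ⟨p, hp⟩ := exists_walk_forall_mem_support hT.2 hvX hvY
    refine ⟨p.toDeleteEdges _ fun e he heAB => v.2 ?_⟩
    rw [Set.mem_singleton_iff] at heAB
    subst heAB
    exact Finset.mem_inter.2 ⟨hp _ (p.fst_mem_support_of_mem_edges he),
      hp _ (p.snd_mem_support_of_mem_edges he)⟩

theorem IsCliqueTree.not_adj (hT : IsCliqueTree G T) {A B : MaxClique G} (hAB : T.Adj A B)
    {x y : V} (hxA : x ∈ A.1) (hxB : x ∉ B.1) (hyB : y ∈ B.1) (hyA : y ∉ A.1) : ¬ G.Adj x y :=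
  fun hxy => hT.not_reachable_induce_compl_inter hAB hxA hxB hyB hyA (Adj.reachable hxy)

theorem IsCliqueTree.subset_or_subset_of_subset_union (hT : IsCliqueTree G T)
    {A B : MaxClique G} (hAB : T.Adj A B) {N : Finset V}
    (hN : G.IsClique (N : Set V)) (hNAB : N ⊆ A.1 ∪ B.1) : N ⊆ A.1 ∨ N ⊆ B.1 := by
  by_contra! h
  obtain ⟨y, hyN, hyA⟩ := Finset.not_subset.1 h.1
  obtain ⟨x, hxN, hxB⟩ := Finset.not_subset.1 h.2
  have hxA : x ∈ A.1 := (Finset.mem_union.1 (hNAB hxN)).resolve_right hxB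
  have hyB : y ∈ B.1 := (Finset.mem_union.1 (hNAB hyN)).resolve_left hyA
  exact hT.not_adj hAB hxA hxB hyB hyA (hN hxN hyN fun hxy => hxB (hxy ▸ hyB))

theorem IsCliqueTree.setOf_not_subset_union (hT : IsCliqueTree G T) {A B : MaxClique G}
    (hAB : T.Adj A B) : {X | ¬ X.1 ⊆ A.1 ∪ B.1} = ({A, B} : Set (MaxClique G))ᶜ := by
  ext X
  simp only [Set.mem_ofPred_eq, Set.mem_compl_iff, Set.mem_insert_iff, Set.mem_singleton_iff,
    not_iff_not]
  refine ⟨fun hX => ?_, ?_⟩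
  · exact (hT.subset_or_subset_of_subset_union hAB X.2.1 hX).imp
      (fun h => Subtype.ext (X.2.2 _ A.2.1 h)) (fun h => Subtype.ext (X.2.2 _ B.2.1 h))
  · rintro (rfl | rfl)
    exacts [Finset.subset_union_left, Finset.subset_union_right]

end Separator

section KTree

variable [Fintype V] {k : ℕ}

-- A clique lies either in the initial `(k + 1)`-clique or, together with its latest vertex `w`,
-- in the `(k + 1)`-clique formed by `w` and the `k`-clique it was attached to.
lemma IsKTree.exists_isClique_card_eq_superset (hG : IsKTree k G) {Q : Finset V}
    (hQ : G.IsClique (Q : Set V)) :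
    ∃ K : Finset V, G.IsClique (K : Set V) ∧ K.card = k + 1 ∧ Q ⊆ K := by
  classical
  obtain ⟨hcard, e, hbase, hstep⟩ := hG
  set F : Finset V := ({i | (i : ℕ) < k + 1} : Finset (Fin (Fintype.card V))).map e.toEmbedding
  have hF : ∀ w, w ∈ F ↔ (e.symm w : ℕ) < k + 1 := by simp [F, Finset.mem_map_equiv]
  have hFclique : G.IsClique (F : Set V) := by
    intro x hx y hy hxy
    simpa using hbase _ _ ((hF x).1 hx) ((hF y).1 hy) (by simpa using hxy)
  have hFcard : F.card = k + 1 := by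
    rw [Finset.card_map, Fin.card_filter_val_lt]
    omega
  rcases Q.eq_empty_or_nonempty with rfl | hQne
  · exact ⟨F, hFclique, hFcard, Finset.empty_subset _⟩
  obtain ⟨w₀, hw₀Q, hw₀⟩ := Q.exists_max_image e.symm hQne
  by_cases hlate : k + 1 ≤ (e.symm w₀ : ℕ)
  · obtain ⟨S, hScard, hSclique, hS⟩ := hstep _ hlate
    simp only [Equiv.apply_symm_apply] at hS
    have hw₀S : w₀ ∉ S := fun h => G.irrefl ((hS w₀).2 h).1
    refine ⟨insert w₀ S, ?_, by rw [Finset.card_insert_of_notMem hw₀S, hScard], ?_⟩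
    · rw [Finset.coe_insert]
      exact hSclique.insert fun w hw _ => ((hS w).2 hw).1
    · intro w hw
      rcases eq_or_ne w w₀ with rfl | hne
      · exact Finset.mem_insert_self _ _
      · refine Finset.mem_insert_of_mem ((hS w).1 ⟨hQ hw₀Q hw hne.symm, e.symm w, ?_, by simp⟩)
        exact lt_of_le_of_ne (hw₀ w hw) (e.symm.injective.ne hne)
  · refine ⟨F, hFclique, hFcard, fun w hw => (hF w).2 ?_⟩
    have := hw₀ w hw
    rw [Fin.le_def] at this
    omega

theorem IsKTree.card_eq_of_isMaximalClique (hG : IsKTree k G) {Q : Finset V}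
    (hQ : IsMaximalClique G Q) : Q.card = k + 1 := by
  obtain ⟨K, hK, hKcard, hQK⟩ := hG.exists_isClique_card_eq_superset hQ.1
  rw [hQ.2 K hK hQK, hKcard]

theorem IsKTree.preconnected_induce_compl (hG : IsKTree k G) {S : Finset V} (hS : S.card < k) :
    (G.induce (S : Set V)ᶜ).Preconnected := by
  classical
  obtain ⟨-, e, hbase, hstep⟩ := hG
  -- A later vertex has `k` earlier neighbours, which cannot all lie in `S`.
  have hreach : ∀ i : Fin (Fintype.card V), ∀ hi : e i ∉ S,
      ∃ j : Fin (Fintype.card V), ∃ hj : e j ∉ S, (j : ℕ) < k + 1 ∧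
        (G.induce (S : Set V)ᶜ).Reachable ⟨e i, hi⟩ ⟨e j, hj⟩ := by
    intro i
    induction i using WellFoundedLT.induction with
    | _ i ih =>
      intro hi
      by_cases hinit : (i : ℕ) < k + 1
      · exact ⟨i, hi, hinit, .rfl⟩
      obtain ⟨Si, hSi, -, hSiff⟩ := hstep i (by omega)
      obtain ⟨w, hwSi, hwS⟩ := Finset.not_subset.1 fun h : Si ⊆ S =>
        absurd (Finset.card_le_card h) (by omega)
      obtain ⟨hadj, j, hji, rfl⟩ := (hSiff _).2 hwSi
      obtain ⟨l, hl, hlk, hjl⟩ := ih j hji hwS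
      exact ⟨l, hl, hlk, (Adj.reachable (induce_adj.2 hadj)).trans hjl⟩
  intro x y
  obtain ⟨i, hi, hik, hxi⟩ := hreach (e.symm x) (by rw [e.apply_symm_apply]; exact x.2)
  obtain ⟨j, hj, hjk, hyj⟩ := hreach (e.symm y) (by rw [e.apply_symm_apply]; exact y.2)
  have hij : (G.induce (S : Set V)ᶜ).Reachable ⟨e i, hi⟩ ⟨e j, hj⟩ := by
    rcases eq_or_ne i j with rfl | hne
    · rfl
    · exact Adj.reachable (induce_adj.2 (hbase i j hik hjk hne))
  simpa using hxi.trans (hij.trans hyj.symm)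

theorem IsKTree.card_inter_of_adj [DecidableEq V] {T : SimpleGraph (MaxClique G)}
    (hG : IsKTree k G) (hT : IsCliqueTree G T) {A B : MaxClique G} (hAB : T.Adj A B) :
    (A.1 ∩ B.1).card = k := by
  have hdiff : ∀ {X Y : MaxClique G}, X ≠ Y → ∃ x ∈ X.1, x ∉ Y.1 :=
    fun {X Y} hXY => Finset.not_subset.1 fun h => hXY (Subtype.ext (X.2.2 _ Y.2.1 h))
  obtain ⟨x, hxA, hxB⟩ := hdiff hAB.ne
  obtain ⟨y, hyB, hyA⟩ := hdiff hAB.ne.symm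
  have hk : k ≤ (A.1 ∩ B.1).card := by
    by_contra! h
    exact hT.not_reachable_induce_compl_inter hAB hxA hxB hyB hyA
      (hG.preconnected_induce_compl h _ _)
  have hlt : (A.1 ∩ B.1).card < A.1.card :=
    Finset.card_lt_card ⟨Finset.inter_subset_left, fun h => hxB (Finset.mem_inter.1 (h hxA)).2⟩
  have := hG.card_eq_of_isMaximalClique A.2
  omega

end KTree

section Exchange

variable [DecidableEq V] {T : SimpleGraph (MaxClique G)}

theorem IsCliqueTree.exchange (hT : IsCliqueTree G T) {C D q : MaxClique G} (hCD : T.Adj C D)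
    (hqC : (T.deleteEdges {s(C, D)}).Reachable q C) (hsub : C.1 ∩ D.1 ⊆ q.1) :
    IsCliqueTree G (T.deleteEdges {s(C, D)} ⊔ edge q D) := by
  set T₀ := T.deleteEdges {s(C, D)}
  have hqD : ¬ T₀.Reachable q D := fun h =>
    isBridge_iff.1 (isAcyclic_iff_forall_isBridge.1 hT.1.isAcyclic (e := s(C, D)) hCD)
      (hqC.symm.trans h)
  have hle : T₀ ≤ T₀ ⊔ edge q D := le_sup_left
  have hadj_qD : (T₀ ⊔ edge q D).Adj q D :=
    Or.inr ((edge_adj ..).2 ⟨.inl ⟨rfl, rfl⟩, fun h => hqD (h ▸ .rfl)⟩)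
  have hkeep : ∀ a b, T.Adj a b → s(a, b) ≠ s(C, D) → (T₀ ⊔ edge q D).Adj a b :=
    fun a b hab hne => hle (deleteEdges_adj.2 ⟨hab, hne⟩)
  refine ⟨⟨{ preconnected := fun x y => ?_, nonempty := ⟨q⟩ },
    (hT.1.isAcyclic.anti (deleteEdges_le _)).sup_edge_of_not_reachable hqD⟩, fun v => ?_⟩
  · refine Reachable.of_adj_imp (f := id) (fun a b hab => ?_) (hT.1.connected.preconnected x y)
    by_cases he : s(a, b) = s(C, D)
    · have hCD' := (hqC.symm.mono hle).trans hadj_qD.reachable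
      rcases Sym2.eq_iff.1 he with ⟨rfl, rfl⟩ | ⟨rfl, rfl⟩
      exacts [hCD', hCD'.symm]
    · exact (hkeep a b hab he).reachable
  · have := (hT.2 v).nonempty
    refine ⟨fun x y => Reachable.of_adj_imp (f := id) (fun ⟨a, ha⟩ ⟨b, hb⟩ hab => ?_)
      ((hT.2 v).preconnected x y)⟩
    by_cases he : s(a, b) = s(C, D)
    · have hvCD : v ∈ C.1 ∩ D.1 := by
        rcases Sym2.eq_iff.1 he with ⟨rfl, rfl⟩ | ⟨rfl, rfl⟩ <;>
        exact Finset.mem_inter.2 ⟨‹_›, ‹_›⟩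
      obtain ⟨hvC, hvD⟩ := Finset.mem_inter.1 hvCD
      have hvq : v ∈ q.1 := hsub hvCD
      have hqC' := ((hT.2 v).preconnected ⟨q, hvq⟩ ⟨C, hvC⟩).induce_deleteEdges hqD
      have hCD' : ((T₀ ⊔ edge q D).induce {Q : MaxClique G | v ∈ Q.1}).Reachable
          ⟨C, hvC⟩ ⟨D, hvD⟩ :=
        (hqC'.mono (comap_monotone _ hle)).symm.trans (induce_adj.2 hadj_qD).reachable
      rcases Sym2.eq_iff.1 he with ⟨rfl, rfl⟩ | ⟨rfl, rfl⟩
      exacts [hCD', hCD'.symm]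
    · exact (induce_adj.2 (hkeep a b hab he)).reachable

theorem IsCliqueTree.not_inter_subset_of_existsUnique (huniq : ∃! T, IsCliqueTree G T)
    (hT : IsCliqueTree G T) {A B q : MaxClique G} (hAB : T.Adj A B) (hqA : q ≠ A)
    (hqB : q ≠ B) : ¬ A.1 ∩ B.1 ⊆ q.1 := by
  have key : ∀ C D, T.Adj C D → q ≠ C → (T.deleteEdges {s(C, D)}).Reachable q C →
      ¬ C.1 ∩ D.1 ⊆ q.1 := by
    intro C D hCD hqC hreach hsub
    have hT' := huniq.unique (hT.exchange hCD hreach hsub) hT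
    have hadj : (T.deleteEdges {s(C, D)} ⊔ edge q D).Adj C D := by
      rwa [hT']
    simp [edge_adj, hqC.symm, hCD.ne] at hadj
  rcases (hT.1.connected.preconnected q A).deleteEdges_or B with h | h
  · exact key A B hAB hqA h
  · rw [Finset.inter_comm]
    exact key B A hAB.symm hqB (by rwa [Sym2.eq_swap])

theorem IsCliqueTree.exists_mem_inter_notMem_union [Finite V] (huniq : ∃! T, IsCliqueTree G T)
    (hT : IsCliqueTree G T) {A B X Y : MaxClique G} (hAB : T.Adj A B)
    (hXY : T.Adj X Y) (hX : ¬ X.1 ⊆ A.1 ∪ B.1) (hY : ¬ Y.1 ⊆ A.1 ∪ B.1) :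
    ∃ v ∈ X.1, v ∈ Y.1 ∧ v ∉ A.1 ∪ B.1 := by
  by_contra! h
  have hsub : X.1 ∩ Y.1 ⊆ A.1 ∪ B.1 := fun v hv =>
    h v (Finset.mem_inter.1 hv).1 (Finset.mem_inter.1 hv).2
  have hclique : G.IsClique ((X.1 ∩ Y.1 : Finset V) : Set V) :=
    X.2.1.subset (Finset.coe_subset.2 Finset.inter_subset_left)
  rcases hT.subset_or_subset_of_subset_union hAB hclique hsub with h' | h'
  · refine hT.not_inter_subset_of_existsUnique huniq hXY ?_ ?_ h' <;> rintro rfl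
    exacts [hX Finset.subset_union_left, hY Finset.subset_union_left]
  · refine hT.not_inter_subset_of_existsUnique huniq hXY ?_ ?_ h' <;> rintro rfl
    exacts [hX Finset.subset_union_right, hY Finset.subset_union_right]

end Exchange

end RanTough

/-- If two degree-4 vertices of the clique-tree of a RAN are adjacent, then removing
`Q_i ∪ Q_j` leaves exactly 6 components, so `τ(G) ≤ 5/6 < 1`. -/
theorem ran_adjacent_deg4 {V : Type*} [Fintype V] [DecidableEq V]
    (G : SimpleGraph V) (hG : IsRAN G)
    (T : SimpleGraph {Q : Finset V // IsMaximalClique G Q}) (hT : IsCliqueTree G T)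
    (qi qj : {Q : Finset V // IsMaximalClique G Q}) (hadj : T.Adj qi qj)
    (hqi : deg T qi = 4) (hqj : deg T qj = 4) :
    compCount G ((qi : Finset V) ∪ (qj : Finset V)) = 6 ∧
      toughness G ≤ 5 / 6 ∧ (5 : ℝ≥0∞) / 6 < 1 := by
  obtain ⟨hkt, huniq⟩ := hG
  set R := (qi : Finset V) ∪ (qj : Finset V) with hR
  have hcard : R.card = 5 := by
    have := Finset.card_union_add_card_inter qi.1 qj.1
    rw [hkt.card_eq_of_isMaximalClique qi.2, hkt.card_eq_of_isMaximalClique qj.2,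
      hkt.card_inter_of_adj hT hadj, ← hR] at this
    omega
  have hcomp : compCount G R = 6 := by
    have := hT.1.natCard_connectedComponent_induce_compl_pair hadj
    rw [compCount_eq_natCard_connectedComponent_induce hT.2 R
      fun X Y hXY hX hY => hT.exists_mem_inter_notMem_union huniq hadj hXY hX hY,
      hT.setOf_not_subset_union hadj]
    omega
  refine ⟨hcomp, ?_, ?_⟩
  · calc toughness G ≤ R.card / compCount G R := toughness_le_of_one_lt_compCount (by omega)
      _ = 5 / 6 := by rw [hcard, hcomp]; norm_cast
  · rw [ENNReal.div_lt_iff (.inl (by norm_num)) (.inl (by norm_num))]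
    norm_num
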